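/- arXiv:2106.13489 — 8 statements merged into one kernel-verified Lean document; each statement's English description precedes it below -/
import Mathlib

section
/- Let (M, η, μ) be a monad on a category C with binary coproducts. Define M^s = Id + M, η^s = inl : Id ⇒ Id + M, and μ^s = [id_{Id+M}, inr ∘ μ ∘ M[η, id_M]] : M^s M^s ⇒ M^s. Then μ^s ∘ M^s η^s = id_{M^s}, i.e., the left unit law holds for the semifree monad. -/
open CategoryTheory CategoryTheory.Limits

universe v u

variable {C : Type u} [Category.{v} C] [HasBinaryCoproducts C]

/-- The underlying functor `Id + M` of the semifree monad. -/
noncomputable def MsF (M : Monad C) : C ⥤ C where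
  obj X := X ⨿ M.obj X
  map f := coprod.map f (M.map f)

/-- The unit of the semifree monad: the left coproduct injection. -/
noncomputable def ηs (M : Monad C) (X : C) : X ⟶ (MsF M).obj X := coprod.inl

/-- The multiplication of the semifree monad:
`μ^s = [id, inr ∘ μ ∘ M[η, id_M]]`. -/
noncomputable def μs (M : Monad C) (X : C) : (MsF M).obj ((MsF M).obj X) ⟶ (MsF M).obj X :=
  coprod.desc (𝟙 ((MsF M).obj X))
    (M.map (coprod.desc (M.η.app X) (𝟙 (M.obj X))) ≫ M.μ.app X ≫ coprod.inr)

/-- Left unit law for the semifree monad: `μ^s ∘ M^s η^s = id`. -/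
theorem semifree_left_unit (M : Monad C) (X : C) :
    (MsF M).map (ηs M X) ≫ μs M X = 𝟙 ((MsF M).obj X) := by
  simp only [MsF, ηs, μs]
  ext
  · rw [coprod.inl_map_assoc, coprod.inl_desc, Category.comp_id]
  · -- `M[η, id] ∘ M inl = Mη`, and `μ ∘ Mη = id` is the right unit law of `M`.
    rw [coprod.inr_map_assoc, coprod.inr_desc, ← M.map_comp_assoc, coprod.inl_desc,
      Monad.right_unit_assoc, Category.comp_id]
end

section
/- Let (M, η, μ) be a monad on a category C with binary coproducts, and define M^s = Id + M with μ^s = [id, inr ∘ μ ∘ M[η, id_M]]. Then μ^s is associative: μ^s ∘ μ^s M^s = μ^s ∘ M^s μ^s. -/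
open CategoryTheory CategoryTheory.Limits

universe v u

variable {C : Type u} [Category.{v} C] [HasBinaryCoproducts C]

/-! The collapse `[η, id] : X + MX ⟶ MX` is a monad morphism `M^s ⟶ M`:
`μ^s ≫ collapse = collapse ≫ M collapse ≫ μ`. With `flatten = M collapse ≫ μ` we have
`μ^s = [id, flatten ≫ inr]`. On the summand `M^s X` both sides of associativity are `μ^s`; on
`M (M^s M^s X)` they are `flatten ≫ flatten ≫ inr` and `M μ^s ≫ flatten ≫ inr`, which agree by
`M` applied to the multiplicativity of collapse, plus naturality and associativity of `μ`. -/

namespace MsF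

variable (M : Monad C)

noncomputable def inr (X : C) : M.obj X ⟶ (MsF M).obj X := coprod.inr

noncomputable def collapse (X : C) : (MsF M).obj X ⟶ M.obj X :=
  coprod.desc (M.η.app X) (𝟙 (M.obj X))

noncomputable def flatten (X : C) : M.obj ((MsF M).obj X) ⟶ M.obj X :=
  M.map (collapse M X) ≫ M.μ.app X

variable {M}

/-- `(MsF M).obj X` is not reducibly a coproduct, so lemmas about `coprod.inl` do not fire on it;
we work with `ηs` and `inr` instead. -/
theorem hom_ext {X Y : C} {f g : (MsF M).obj X ⟶ Y}
    (h₁ : ηs M X ≫ f = ηs M X ≫ g) (h₂ : inr M X ≫ f = inr M X ≫ g) : f = g :=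
  coprod.hom_ext h₁ h₂

variable (M) {X Y Z : C}

@[simp]
theorem ηs_map (f : X ⟶ Y) : ηs M X ≫ (MsF M).map f = f ≫ ηs M Y :=
  coprod.inl_map _ _

@[simp]
theorem ηs_map_assoc (f : X ⟶ Y) (h : (MsF M).obj Y ⟶ Z) :
    ηs M X ≫ (MsF M).map f ≫ h = f ≫ ηs M Y ≫ h := by
  rw [← Category.assoc, ηs_map, Category.assoc]

@[simp]
theorem inr_map (f : X ⟶ Y) : inr M X ≫ (MsF M).map f = M.map f ≫ inr M Y :=
  coprod.inr_map _ _

@[simp]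
theorem inr_map_assoc (f : X ⟶ Y) (h : (MsF M).obj Y ⟶ Z) :
    inr M X ≫ (MsF M).map f ≫ h = M.map f ≫ inr M Y ≫ h := by
  rw [← Category.assoc, inr_map, Category.assoc]

@[simp]
theorem ηs_collapse : ηs M X ≫ collapse M X = M.η.app X :=
  coprod.inl_desc _ _

@[simp]
theorem ηs_collapse_assoc (h : M.obj X ⟶ Y) : ηs M X ≫ collapse M X ≫ h = M.η.app X ≫ h := by
  rw [← Category.assoc, ηs_collapse]

@[simp]
theorem inr_collapse : inr M X ≫ collapse M X = 𝟙 (M.obj X) :=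
  coprod.inr_desc _ _

@[simp]
theorem inr_collapse_assoc (h : M.obj X ⟶ Y) : inr M X ≫ collapse M X ≫ h = h := by
  rw [← Category.assoc, inr_collapse, Category.id_comp]

@[simp]
theorem ηs_μs : ηs M ((MsF M).obj X) ≫ μs M X = 𝟙 ((MsF M).obj X) :=
  coprod.inl_desc _ _

@[simp]
theorem ηs_μs_assoc (h : (MsF M).obj X ⟶ Y) : ηs M ((MsF M).obj X) ≫ μs M X ≫ h = h := by
  rw [← Category.assoc, ηs_μs, Category.id_comp]

@[simp]
theorem inr_μs : inr M ((MsF M).obj X) ≫ μs M X = flatten M X ≫ inr M X :=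
  (coprod.inr_desc _ _).trans (Category.assoc _ _ _).symm

@[simp]
theorem inr_μs_assoc (h : (MsF M).obj X ⟶ Y) :
    inr M ((MsF M).obj X) ≫ μs M X ≫ h = flatten M X ≫ inr M X ≫ h := by
  rw [← Category.assoc, inr_μs, Category.assoc]

theorem μs_collapse : μs M X ≫ collapse M X = collapse M ((MsF M).obj X) ≫ flatten M X := by
  apply hom_ext
  · simp [flatten, ← M.unit_naturality_assoc]
  · simp

theorem map_μs_flatten :
    M.map (μs M X) ≫ flatten M X = flatten M ((MsF M).obj X) ≫ flatten M X :=
  calc M.map (μs M X) ≫ flatten M X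
      = M.map (collapse M ((MsF M).obj X) ≫ flatten M X) ≫ M.μ.app X := by
        rw [← μs_collapse, flatten, M.map_comp_assoc]
    _ = M.map (collapse M ((MsF M).obj X)) ≫ M.map (M.map (collapse M X)) ≫
          M.μ.app (M.obj X) ≫ M.μ.app X := by
        simp [flatten, M.assoc]
    _ = flatten M ((MsF M).obj X) ≫ flatten M X := by
        simp [flatten, M.mu_naturality_assoc]

theorem map_μs_flatten_assoc (h : M.obj X ⟶ Y) :
    M.map (μs M X) ≫ flatten M X ≫ h = flatten M ((MsF M).obj X) ≫ flatten M X ≫ h := by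
  rw [← Category.assoc, map_μs_flatten, Category.assoc]

end MsF

open MsF in
/-- Associativity of the semifree multiplication: `μ^s ∘ μ^s M^s = μ^s ∘ M^s μ^s`. -/
theorem semifree_assoc (M : Monad C) (X : C) :
    μs M ((MsF M).obj X) ≫ μs M X = (MsF M).map (μs M X) ≫ μs M X := by
  apply hom_ext
  · simp
  · simp [map_μs_flatten_assoc]
end

section
/- Let (M, η, μ) be a monad on a category C with binary coproducts. The triple (M^s, η^s, μ^s) with M^s = Id + M, η^s = inl, and μ^s = [id, inr ∘ μ ∘ M[η, id_M]] is a monad on C (the semifree monad on M). -/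
open CategoryTheory CategoryTheory.Limits

universe v u

variable {C : Type u} [Category.{v} C] [HasBinaryCoproducts C]

/-!
Write `ε = [η, id] : X + MX ⟶ MX` (`collapse`) for the map collapsing `M^s` onto `M`, so that
`μ^s = [id, inr ∘ μ ∘ Mε]`. Everything is checked separately on the two summands; the only
nontrivial case is associativity on the `M`-summand, which reduces to associativity of `μ`
once one knows that `ε` is multiplicative: `ε ∘ μ^s = μ ∘ Mε ∘ ε`.
-/

namespace SemifreeMonad

variable (M : Monad C)

noncomputable def inrs (X : C) : M.obj X ⟶ (MsF M).obj X := coprod.inr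

noncomputable def collapse (X : C) : (MsF M).obj X ⟶ M.obj X :=
  coprod.desc (M.η.app X) (𝟙 (M.obj X))

variable {M}

@[ext]
lemma hom_ext {X Y : C} {f g : (MsF M).obj X ⟶ Y}
    (h₁ : ηs M X ≫ f = ηs M X ≫ g) (h₂ : inrs M X ≫ f = inrs M X ≫ g) : f = g :=
  coprod.hom_ext h₁ h₂

variable (M)

@[simp]
lemma ηs_collapse (X : C) : ηs M X ≫ collapse M X = M.η.app X :=
  coprod.inl_desc _ _

@[simp]
lemma ηs_collapse_assoc (X : C) {Z : C} (h : M.obj X ⟶ Z) :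
    ηs M X ≫ collapse M X ≫ h = M.η.app X ≫ h := by
  simp only [← Category.assoc, ηs_collapse]

@[simp]
lemma inrs_collapse (X : C) : inrs M X ≫ collapse M X = 𝟙 (M.obj X) :=
  coprod.inr_desc _ _

@[simp]
lemma inrs_collapse_assoc (X : C) {Z : C} (h : M.obj X ⟶ Z) :
    inrs M X ≫ collapse M X ≫ h = h := by
  simp only [← Category.assoc, inrs_collapse, Category.id_comp]

@[simp]
lemma ηs_μs (X : C) : ηs M ((MsF M).obj X) ≫ μs M X = 𝟙 ((MsF M).obj X) :=
  coprod.inl_desc _ _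

@[simp]
lemma ηs_μs_assoc (X : C) {Z : C} (h : (MsF M).obj X ⟶ Z) :
    ηs M ((MsF M).obj X) ≫ μs M X ≫ h = h := by
  simp only [← Category.assoc, ηs_μs, Category.id_comp]

@[simp]
lemma inrs_μs (X : C) :
    inrs M ((MsF M).obj X) ≫ μs M X = M.map (collapse M X) ≫ M.μ.app X ≫ inrs M X :=
  coprod.inr_desc _ _

@[simp]
lemma inrs_μs_assoc (X : C) {Z : C} (h : (MsF M).obj X ⟶ Z) :
    inrs M ((MsF M).obj X) ≫ μs M X ≫ h = M.map (collapse M X) ≫ M.μ.app X ≫ inrs M X ≫ h := by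
  simp only [← Category.assoc, inrs_μs]

@[simp]
lemma ηs_naturality {X Y : C} (f : X ⟶ Y) : ηs M X ≫ (MsF M).map f = f ≫ ηs M Y :=
  coprod.inl_map _ _

@[simp]
lemma ηs_naturality_assoc {X Y : C} (f : X ⟶ Y) {Z : C} (h : (MsF M).obj Y ⟶ Z) :
    ηs M X ≫ (MsF M).map f ≫ h = f ≫ ηs M Y ≫ h := by
  simp only [← Category.assoc, ηs_naturality]

@[simp]
lemma inrs_naturality {X Y : C} (f : X ⟶ Y) : inrs M X ≫ (MsF M).map f = M.map f ≫ inrs M Y :=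
  coprod.inr_map _ _

@[simp]
lemma inrs_naturality_assoc {X Y : C} (f : X ⟶ Y) {Z : C} (h : (MsF M).obj Y ⟶ Z) :
    inrs M X ≫ (MsF M).map f ≫ h = M.map f ≫ inrs M Y ≫ h := by
  simp only [← Category.assoc, inrs_naturality]

lemma collapse_naturality {X Y : C} (f : X ⟶ Y) :
    (MsF M).map f ≫ collapse M Y = collapse M X ≫ M.map f := by
  ext : 1
  · simpa using M.η.naturality f
  · simp

lemma μs_collapse (X : C) :
    μs M X ≫ collapse M X =
      collapse M ((MsF M).obj X) ≫ M.map (collapse M X) ≫ M.μ.app X := by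
  ext : 1 <;> simp [← M.η.naturality_assoc]

lemma μs_naturality {X Y : C} (f : X ⟶ Y) :
    (MsF M).map ((MsF M).map f) ≫ μs M Y = μs M X ≫ (MsF M).map f := by
  ext : 1
  · simp
  · simp only [inrs_naturality, inrs_naturality_assoc, inrs_μs, inrs_μs_assoc]
    rw [← M.map_comp_assoc, collapse_naturality, M.map_comp_assoc, ← M.μ.naturality_assoc]
    rfl

lemma map_ηs_μs (X : C) : (MsF M).map (ηs M X) ≫ μs M X = 𝟙 ((MsF M).obj X) := by
  ext : 1 <;> simp [← Functor.map_comp_assoc]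

lemma map_μs_μs (X : C) :
    (MsF M).map (μs M X) ≫ μs M X = μs M ((MsF M).obj X) ≫ μs M X := by
  ext : 1
  · simp
  · simp only [inrs_naturality_assoc, inrs_μs, inrs_μs_assoc]
    rw [← M.map_comp_assoc, μs_collapse, M.map_comp, M.map_comp, Category.assoc, Category.assoc,
      ← Category.assoc (M.map (M.μ.app X)), M.assoc, Category.assoc, ← M.μ.naturality_assoc]
    rfl

end SemifreeMonad

open SemifreeMonad in
noncomputable def semifreeMonad (M : Monad C) : Monad C where
  toFunctor := MsF M
  η := { app := ηs M, naturality := fun _ _ f => (ηs_naturality M f).symm }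
  μ := { app := μs M, naturality := fun _ _ f => μs_naturality M f }
  left_unit := ηs_μs M
  right_unit := map_ηs_μs M
  assoc := map_μs_μs M

/-- The triple `(M^s, η^s, μ^s)` is a monad: the unit and the multiplication are
natural transformations with the prescribed components, and the three monad laws hold. -/
theorem semifree_isMonad (M : Monad C) :
    ∃ (η' : 𝟭 C ⟶ MsF M) (μ' : MsF M ⋙ MsF M ⟶ MsF M),
      (∀ X : C, η'.app X = ηs M X) ∧
      (∀ X : C, μ'.app X = μs M X) ∧
      (∀ X : C, (MsF M).map (η'.app X) ≫ μ'.app X = 𝟙 ((MsF M).obj X)) ∧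
      (∀ X : C, η'.app ((MsF M).obj X) ≫ μ'.app X = 𝟙 ((MsF M).obj X)) ∧
      (∀ X : C, μ'.app ((MsF M).obj X) ≫ μ'.app X =
        (MsF M).map (μ'.app X) ≫ μ'.app X) :=
  ⟨(semifreeMonad M).η, (semifreeMonad M).μ, fun _ => rfl, fun _ => rfl,
    (semifreeMonad M).right_unit, (semifreeMonad M).left_unit,
    fun X => ((semifreeMonad M).assoc X).symm⟩
end

section
/- Let (M, η, μ) be a monad on a category C with binary coproducts, X an object, and a : MX → X a morphism. Then [id_X, a] : X + MX → X is an Eilenberg–Moore algebra for the semifree monad M^s if and only if a is an M-semialgebra (i.e., a ∘ Ma = a ∘ μ_X). -/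
open CategoryTheory CategoryTheory.Limits

universe v u

variable {C : Type u} [Category.{v} C] [HasBinaryCoproducts C]

/-! The unit law for `[id, a]` holds automatically, and the multiplication law holds on the
`inl` summand, so everything reduces to the `inr` summand, `a ∘ μ ∘ M[η, id] = a ∘ M[id, a]`.
Restricting along `M inr` yields `a ∘ μ = a ∘ Ma`. Conversely, for a semialgebra `a` the
identity `a ∘ η ∘ a = a` gives `a ∘ [η, id] = a ∘ η ∘ [id, a]`, and `a ∘ M(a ∘ η) = a`
finishes the computation. -/

section Semialgebra

variable {D : Type*} [Category D] (M : Monad D) {X : D} {a : M.obj X ⟶ X}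

theorem map_comp_μ_comp_of_semialgebra (ha : M.map a ≫ a = M.μ.app X ≫ a) {Y : D}
    (g : Y ⟶ M.obj X) : M.map g ≫ M.μ.app X ≫ a = M.map (g ≫ a) ≫ a := by
  rw [← ha, Functor.map_comp_assoc]

theorem comp_η_comp_of_semialgebra (ha : M.map a ≫ a = M.μ.app X ≫ a) :
    a ≫ M.η.app X ≫ a = a :=
  calc a ≫ M.η.app X ≫ a = M.η.app _ ≫ M.map a ≫ a := M.η.naturality_assoc a a
    _ = a := by rw [ha]; exact M.left_unit_assoc X a

theorem map_η_comp_comp_of_semialgebra (ha : M.map a ≫ a = M.μ.app X ≫ a) :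
    M.map (M.η.app X ≫ a) ≫ a = a := by
  rw [Functor.map_comp_assoc, ha]
  exact M.right_unit_assoc X a

end Semialgebra

theorem inl_μs_comp (M : Monad C) (X : C) {Y : C} (f : (MsF M).obj X ⟶ Y) :
    coprod.inl ≫ μs M X ≫ f = f :=
  (coprod.inl_desc_assoc _ _ _).trans (Category.id_comp f)

theorem inr_μs_comp (M : Monad C) (X : C) {Y : C} (f : (MsF M).obj X ⟶ Y) :
    coprod.inr ≫ μs M X ≫ f =
      M.map (coprod.desc (M.η.app X) (𝟙 (M.obj X))) ≫ M.μ.app X ≫ coprod.inr ≫ f :=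
  (coprod.inr_desc_assoc _ _ _).trans ((Category.assoc _ _ _).trans (_ ≫= Category.assoc _ _ _))

theorem ηs_comp_desc_id (M : Monad C) {X : C} (a : M.obj X ⟶ X) :
    ηs M X ≫ coprod.desc (𝟙 X) a = 𝟙 X :=
  coprod.inl_desc _ _

-- Term-mode: `rw` and `simp` fail to match here, as `(MsF M).obj X` and `X ⨿ M.obj X`
-- are only equal at default transparency.
theorem μs_comp_desc_id_iff (M : Monad C) {X : C} (a : M.obj X ⟶ X) :
    μs M X ≫ coprod.desc (𝟙 X) a = (MsF M).map (coprod.desc (𝟙 X) a) ≫ coprod.desc (𝟙 X) a ↔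
      M.map (coprod.desc (M.η.app X) (𝟙 (M.obj X))) ≫ M.μ.app X ≫ a =
        M.map (coprod.desc (𝟙 X) a) ≫ a := by
  have hinl : coprod.inl ≫ μs M X ≫ coprod.desc (𝟙 X) a =
      coprod.inl ≫ (MsF M).map (coprod.desc (𝟙 X) a) ≫ coprod.desc (𝟙 X) a :=
    (inl_μs_comp M X _).trans ((coprod.inl_map_assoc _ _ _).trans
      ((_ ≫= coprod.inl_desc _ _).trans (Category.comp_id _))).symm
  have hinr : coprod.inr ≫ μs M X ≫ coprod.desc (𝟙 X) a =
      M.map (coprod.desc (M.η.app X) (𝟙 (M.obj X))) ≫ M.μ.app X ≫ a :=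
    (inr_μs_comp M X _).trans (_ ≫= _ ≫= coprod.inr_desc _ _)
  have hinr' : coprod.inr ≫ (MsF M).map (coprod.desc (𝟙 X) a) ≫ coprod.desc (𝟙 X) a =
      M.map (coprod.desc (𝟙 X) a) ≫ a :=
    (coprod.inr_map_assoc _ _ _).trans (_ ≫= coprod.inr_desc _ _)
  exact ⟨fun h => hinr.symm.trans ((coprod.inr ≫= h).trans hinr'),
    fun h => coprod.hom_ext hinl (hinr.trans (h.trans hinr'.symm))⟩

theorem map_desc_η_id_comp_μ_comp_eq_iff (M : Monad C) {X : C} (a : M.obj X ⟶ X) :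
    M.map (coprod.desc (M.η.app X) (𝟙 (M.obj X))) ≫ M.μ.app X ≫ a =
        M.map (coprod.desc (𝟙 X) a) ≫ a ↔
      M.map a ≫ a = M.μ.app X ≫ a := by
  constructor
  · intro h
    have h' := M.map coprod.inr ≫= h
    rw [← Functor.map_comp_assoc, ← Functor.map_comp_assoc, coprod.inr_desc, coprod.inr_desc,
      M.map_id, Category.id_comp] at h'
    exact h'.symm
  · intro ha
    have hdesc : coprod.desc (M.η.app X ≫ a) a = coprod.desc (𝟙 X) a ≫ M.η.app X ≫ a := by
      ext <;> simp [comp_η_comp_of_semialgebra M ha]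
    rw [map_comp_μ_comp_of_semialgebra M ha, coprod.desc_comp, Category.id_comp, hdesc,
      Functor.map_comp_assoc, map_η_comp_comp_of_semialgebra M ha]

/-- `[id_X, a]` is an Eilenberg--Moore algebra for the semifree monad `M^s`
iff `a` is an `M`-semialgebra. -/
theorem desc_id_isAlgebra_iff_semialgebra (M : Monad C) {X : C} (a : M.obj X ⟶ X) :
    (ηs M X ≫ coprod.desc (𝟙 X) a = 𝟙 X ∧
      μs M X ≫ coprod.desc (𝟙 X) a =
        (MsF M).map (coprod.desc (𝟙 X) a) ≫ coprod.desc (𝟙 X) a) ↔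
    M.map a ≫ a = M.μ.app X ≫ a := by
  rw [μs_comp_desc_id_iff, map_desc_η_id_comp_μ_comp_eq_iff]
  exact and_iff_right (ηs_comp_desc_id M a)
end

section
/- Let (M, η, μ) be a monad on a category C with binary coproducts. The category of M-semialgebras (morphisms a : MX → X with a ∘ Ma = a ∘ μ_X, with homomorphisms f : X → Y satisfying f ∘ a = b ∘ Mf) is isomorphic to the Eilenberg–Moore category of the semifree monad M^s, via a ↦ [id_X, a]. -/
open CategoryTheory CategoryTheory.Limits

universe v u

variable {C : Type u} [Category.{v} C] [HasBinaryCoproducts C]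

/-- The semifree monad `M^s = (Id + M, inl, [id, inr ∘ μ ∘ M[η, id_M]])` on `M`. -/
noncomputable def MsMonad (M : Monad C) : Monad C where
  toFunctor := MsF M
  η := { app := fun X => (coprod.inl : X ⟶ X ⨿ M.obj X),
         naturality := by intro X Y f; simp [MsF] }
  μ := { app := fun X => μs M X,
         naturality := by
           intro X Y f
           dsimp [MsF, μs]
           apply coprod.hom_ext
           · simp
             erw [coprod.inl_desc, coprod.inl_desc_assoc, Category.id_comp]
           · rw [coprod.map_desc]
             simp only [coprod.inr_desc]
             rw [← Functor.map_comp_assoc]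
             have h : coprod.map f (M.map f) ≫ coprod.desc (M.η.app Y) (𝟙 (M.obj Y)) =
                 coprod.desc (M.η.app X) (𝟙 (M.obj X)) ≫ M.map f := by
               apply coprod.hom_ext
               · simp only [coprod.inl_map_assoc, coprod.inl_desc, coprod.inl_desc_assoc]
                 exact M.η.naturality f
               · simp
                 erw [coprod.inr_desc, coprod.inr_desc]
             rw [h, Functor.map_comp_assoc]
             have := M.μ.naturality f
             dsimp at this
             rw [reassoc_of% this]
             simp
             erw [coprod.inr_desc_assoc, Category.assoc, Category.assoc, coprod.inr_map] }
  left_unit := by intro X; simp [μs]; erw [coprod.inl_desc]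
  right_unit := by
    intro X
    dsimp [MsF, μs]
    apply coprod.hom_ext
    · simp
      erw [coprod.inl_desc]
    · simp
      erw [coprod.inr_desc, ← Functor.map_comp_assoc, coprod.inl_desc, ← Category.assoc, M.right_unit,
        Category.id_comp]
  assoc := by
    intro X
    show (MsF M).map (μs M X) ≫ μs M X = μs M ((MsF M).obj X) ≫ μs M X
    dsimp only [MsF]
    have key : coprod.desc (𝟙 (X ⨿ M.obj X))
          (M.map (coprod.desc (M.η.app X) (𝟙 (M.obj X))) ≫ M.μ.app X ≫ coprod.inr) ≫
        coprod.desc (M.η.app X) (𝟙 (M.obj X)) =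
        coprod.desc (M.η.app (X ⨿ M.obj X)) (𝟙 (M.obj (X ⨿ M.obj X))) ≫
          M.map (coprod.desc (M.η.app X) (𝟙 (M.obj X))) ≫ M.μ.app X := by
      have hnat := M.η.naturality (coprod.desc (M.η.app X) (𝟙 (M.obj X)))
      dsimp at hnat
      apply coprod.hom_ext
      · simp only [μs, coprod.inl_desc_assoc, Category.id_comp, coprod.inl_desc,
          coprod.inl_desc_assoc]
        rw [← Category.assoc, ← hnat, Category.assoc, M.left_unit]
        exact (Category.comp_id (coprod.desc (M.η.app X) (𝟙 (M.obj X)))).symm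
      · simp [μs, MsF]
        erw [coprod.inr_desc, coprod.inr_desc, coprod.inr_desc, Category.comp_id]
    have hnatμ := M.μ.naturality (coprod.desc (M.η.app X) (𝟙 (M.obj X)))
    dsimp at hnatμ
    apply coprod.hom_ext
    · simp [μs, MsF]
      erw [coprod.inl_desc_assoc, Category.id_comp, coprod.inl_desc]
    · simp only [μs, MsF, coprod.inr_map_assoc, coprod.inr_desc, coprod.inr_desc_assoc]
      rw [← Functor.map_comp_assoc]
      erw [key]
      simp only [Functor.map_comp, Category.assoc]
      rw [reassoc_of% (M.assoc X), reassoc_of% hnatμ]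
      simp
      erw [coprod.inr_desc]

/-- The category of `M`-semialgebras: objects are morphisms `a : MX ⟶ X`
satisfying only the associativity axiom `a ∘ Ma = a ∘ μ_X`. -/
structure SemiAlg (M : Monad C) where
  X : C
  a : M.obj X ⟶ X
  assoc : M.map a ≫ a = M.μ.app X ≫ a

instance (M : Monad C) : Category (SemiAlg M) where
  Hom A B := { f : A.X ⟶ B.X // A.a ≫ f = M.map f ≫ B.a }
  id A := ⟨𝟙 A.X, by simp⟩
  comp {A B D} f g := ⟨f.1 ≫ g.1, by
    rw [← Category.assoc, f.2, Category.assoc, g.2, ← Category.assoc, ← Functor.map_comp]⟩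
  id_comp f := by apply Subtype.ext; simp
  comp_id f := by apply Subtype.ext; simp
  assoc f g h := by apply Subtype.ext; simp

/-!
A semialgebra `a : MX ⟶ X` gives `[id, a] : X + MX ⟶ X`, and an `M^s`-algebra `b` gives
`inr ≫ b`. The unit law `inl ≫ b = id` says precisely that `b = [id, inr ≫ b]`, so the two
constructions are mutually inverse; both are the identity on underlying morphisms. The only real
work is associativity of `[id, a]` on the `M`-summand, which comes down to
`[η, id] ≫ a = [id, a] ≫ η ≫ a`, i.e. to `a ≫ η ≫ a = a`; the latter holds in every semialgebra
by naturality of `η`, `Ma ≫ a = μ ≫ a` and `ηM ≫ μ = id`.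
-/

section

variable {D : Type*} [Category D] {T : Monad D}

lemma CategoryTheory.Monad.Algebra.ext_of_heq {A B : T.Algebra} (hA : A.A = B.A)
    (ha : HEq A.a B.a) : A = B := by
  cases A; cases B; cases hA; cases ha; rfl

lemma CategoryTheory.Monad.Algebra.Hom.heq_of_f_heq {A B A' B' : T.Algebra} (hA : A = A')
    (hB : B = B') {f : A ⟶ B} {g : A' ⟶ B'} (h : HEq f.f g.f) : HEq f g := by
  subst hA hB
  exact heq_of_eq (Monad.Algebra.Hom.ext (eq_of_heq h))

namespace SemiAlg

lemma ext_of_heq {A B : SemiAlg T} (hX : A.X = B.X) (ha : HEq A.a B.a) : A = B := by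
  cases A; cases B; cases hX; cases ha; rfl

lemma hom_heq_of_val_heq {A B A' B' : SemiAlg T} (hA : A = A') (hB : B = B')
    {f : A ⟶ B} {g : A' ⟶ B'} (h : HEq f.1 g.1) : HEq f g := by
  subst hA hB
  exact heq_of_eq (Subtype.ext (eq_of_heq h))

lemma a_η_a (A : SemiAlg T) : A.a ≫ T.η.app A.X ≫ A.a = A.a := by
  have h := T.η.naturality A.a
  dsimp at h
  rw [reassoc_of% h, A.assoc, T.left_unit_assoc]

end SemiAlg

end

namespace SemiAlg

variable {M : Monad C}

lemma desc_η_id_comp_a (A : SemiAlg M) :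
    coprod.desc (X := A.X) (M.η.app A.X) (𝟙 _) ≫ A.a =
      coprod.desc (𝟙 _) A.a ≫ M.η.app A.X ≫ A.a := by
  ext <;> simp [a_η_a]

lemma μs_comp_desc_id (A : SemiAlg M) :
    coprod.desc (𝟙 (A.X ⨿ M.obj A.X))
        (M.map (coprod.desc (M.η.app A.X) (𝟙 _)) ≫ M.μ.app A.X ≫ coprod.inr) ≫
      coprod.desc (𝟙 A.X) A.a =
    coprod.map (coprod.desc (𝟙 A.X) A.a) (M.map (coprod.desc (𝟙 A.X) A.a)) ≫
      coprod.desc (𝟙 A.X) A.a := by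
  -- `M.η.app X` starts at `(𝟭 C).obj X`; the coprod simp lemmas only match once that is unfolded
  apply coprod.hom_ext <;> dsimp only [Functor.id_obj, Functor.comp_obj]
  · simp only [coprod.inl_desc_assoc, coprod.inl_map_assoc, coprod.inl_desc, Category.id_comp,
      Category.comp_id]
  · simp only [coprod.inr_desc_assoc, coprod.inr_map_assoc, coprod.inr_desc, Category.assoc,
      ← A.assoc, ← Functor.map_comp_assoc, desc_η_id_comp_a]
    simp only [Functor.map_comp, Category.assoc, A.assoc, M.right_unit_assoc]

lemma coprod_map_comp_desc_id {X Y : C} {a : M.obj X ⟶ X} {b : M.obj Y ⟶ Y} {f : X ⟶ Y}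
    (hf : a ≫ f = M.map f ≫ b) :
    coprod.map f (M.map f) ≫ coprod.desc (𝟙 Y) b = coprod.desc (𝟙 X) a ≫ f := by
  ext <;> simp [hf]

lemma inr_comp_semialgebra_assoc {X : C} {b : X ⨿ M.obj X ⟶ X}
    (hb : coprod.desc (𝟙 (X ⨿ M.obj X))
          (M.map (coprod.desc (X := X) (M.η.app X) (𝟙 _)) ≫ M.μ.app X ≫ coprod.inr) ≫ b =
        coprod.map b (M.map b) ≫ b) :
    M.map (coprod.inr ≫ b) ≫ coprod.inr ≫ b = M.μ.app X ≫ coprod.inr ≫ b := by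
  have h := M.map coprod.inr ≫= (coprod.inr ≫= hb)
  simp only [coprod.inr_desc_assoc, coprod.inr_map_assoc, Category.assoc, ← Functor.map_comp_assoc,
    coprod.inr_desc, M.map_id, Category.id_comp] at h
  exact h.symm

lemma inr_comp_hom_comm {X Y : C} {a : X ⨿ M.obj X ⟶ X} {b : Y ⨿ M.obj Y ⟶ Y} {f : X ⟶ Y}
    (hf : coprod.map f (M.map f) ≫ b = a ≫ f) :
    (coprod.inr ≫ a) ≫ f = M.map f ≫ coprod.inr ≫ b := by
  simpa using (coprod.inr ≫= hf).symm

lemma desc_id_inr_comp {X : C} {b : X ⨿ M.obj X ⟶ X} (hb : coprod.inl ≫ b = 𝟙 X) :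
    coprod.desc (𝟙 X) (coprod.inr ≫ b) = b :=
  coprod.hom_ext (by rw [coprod.inl_desc, hb]) (coprod.inr_desc _ _)

noncomputable def toSemifree : SemiAlg M ⥤ (MsMonad M).Algebra where
  obj A :=
    { A := A.X
      a := coprod.desc (𝟙 A.X) A.a
      unit := coprod.inl_desc _ _
      assoc := A.μs_comp_desc_id }
  map f := { f := f.1, h := coprod_map_comp_desc_id f.2 }

noncomputable def ofSemifree : (MsMonad M).Algebra ⥤ SemiAlg M where
  obj B :=
    { X := B.A
      a := coprod.inr ≫ B.a
      assoc := inr_comp_semialgebra_assoc B.assoc }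
  map f := ⟨f.f, inr_comp_hom_comm f.h⟩

lemma toSemifree_comp_ofSemifree : toSemifree ⋙ ofSemifree = 𝟭 (SemiAlg M) := by
  have hobj (A : SemiAlg M) : ofSemifree.obj (toSemifree.obj A) = A :=
    ext_of_heq rfl (heq_of_eq (coprod.inr_desc _ _))
  exact Functor.hext hobj fun A B _ ↦ hom_heq_of_val_heq (hobj A) (hobj B) HEq.rfl

lemma ofSemifree_comp_toSemifree : ofSemifree ⋙ toSemifree = 𝟭 (MsMonad M).Algebra := by
  have hobj (B : (MsMonad M).Algebra) : toSemifree.obj (ofSemifree.obj B) = B :=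
    Monad.Algebra.ext_of_heq rfl (heq_of_eq (desc_id_inr_comp B.unit))
  exact Functor.hext hobj fun A B _ ↦ Monad.Algebra.Hom.heq_of_f_heq (hobj A) (hobj B) HEq.rfl

end SemiAlg

/-- The category of `M`-semialgebras is isomorphic to the Eilenberg--Moore category
of the semifree monad `M^s`, via `a ↦ [id_X, a]`. -/
theorem semialg_iso_semifree_algebras (M : Monad C) :
    ∃ e : Cat.of (SemiAlg M) ≅ Cat.of ((MsMonad M).Algebra),
      ∀ A : SemiAlg M,
        ((e.hom.toFunctor.obj A).A = A.X) ∧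
        HEq (e.hom.toFunctor.obj A).a (coprod.desc (𝟙 A.X) A.a) :=
  ⟨{ hom := SemiAlg.toSemifree.toCatHom
     inv := SemiAlg.ofSemifree.toCatHom
     hom_inv_id := Cat.Hom.ext SemiAlg.toSemifree_comp_ofSemifree
     inv_hom_id := Cat.Hom.ext SemiAlg.ofSemifree_comp_toSemifree },
    fun _ ↦ ⟨rfl, HEq.rfl⟩⟩
end

section
/- Let λ : MT ⇒ TM be a weak distributive law of M over T. Then for every M-semialgebra x : MX → X, the multiplication component μ^T_X : TTX → TX is a homomorphism of M-semialgebras from (TTX, T(Tx ∘ λ_X) ∘ λ_{TX}) to (TX, Tx ∘ λ_X), i.e., Tx ∘ λ_X ∘ Mμ^T_X = μ^T_X ∘ T(Tx ∘ λ_X) ∘ λ_{TX}. -/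
open CategoryTheory

universe v u

variable {C : Type u} [Category.{v} C]

/-- Given a weak distributive law `λ : MT ⇒ TM` and an `M`-semialgebra `x`, the multiplication `μ^T_X` is a homomorphism of semialgebras: `Tx ∘ λ_X ∘ Mμ^T_X = μ^T_X ∘ T(Tx ∘ λ_X) ∘ λ_{TX}`. -/
theorem wdl_mult_homomorphism (M T : Monad C)
    (l : ∀ X : C, M.obj (T.obj X) ⟶ T.obj (M.obj X))
    (nat : ∀ {X Y : C} (f : X ⟶ Y),
      M.map (T.map f) ≫ l Y = l X ≫ T.map (M.map f))
    (unitT : ∀ X : C, M.map (T.η.app X) ≫ l X = T.η.app (M.obj X))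
    (multM : ∀ X : C, M.μ.app (T.obj X) ≫ l X =
      M.map (l X) ≫ l (M.obj X) ≫ T.map (M.μ.app X))
    (multT : ∀ X : C, M.map (T.μ.app X) ≫ l X =
      l (T.obj X) ≫ T.map (l X) ≫ T.μ.app (M.obj X))
    {X : C} (x : M.obj X ⟶ X) (hx : M.map x ≫ x = M.μ.app X ≫ x) :
    M.map (T.μ.app X) ≫ l X ≫ T.map x = l (T.obj X) ≫ T.map (l X ≫ T.map x) ≫ T.μ.app X := by
  rw [← Category.assoc, multT]
  simp only [Functor.map_comp, Category.assoc]
  rw [← T.μ.naturality x]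
  rfl
end

section
/- The category of semialgebras for the maybe monad on Set (the monad X ↦ X + 1) is isomorphic to the category of algebras for the theory with a unary operation a and a constant •, subject to the equations a(a(x)) = a(x) and a(•) = •, with homomorphisms preserving both operations. -/
open CategoryTheory

universe u

/-- A semialgebra for the maybe monad `X ↦ X + 1` on `Set`:
a function `f : X + 1 → X` with `f ∘ (f + id) = f ∘ [id, inr]`. -/
structure MaybeSemiAlg : Type (u + 1) where
  X : Type u
  f : X ⊕ PUnit.{u+1} → X
  law : ∀ z : (X ⊕ PUnit.{u+1}) ⊕ PUnit.{u+1}, f (Sum.map f id z) = f (Sum.elim id Sum.inr z)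

/-- Homomorphisms of maybe-semialgebras: `h ∘ f = g ∘ (h + id)`. -/
instance : Category MaybeSemiAlg.{u} where
  Hom A B := { h : A.X → B.X // ∀ w, h (A.f w) = B.f (Sum.map h id w) }
  id A := ⟨id, by intro w; cases w <;> rfl⟩
  comp {A B D} f g := ⟨g.1 ∘ f.1, by
    intro w
    simp only [Function.comp_apply, f.2, g.2]
    cases w <;> rfl⟩
  id_comp f := rfl
  comp_id f := rfl
  assoc f g h := rfl

/-- A pointed set with an idempotent unary operation preserving the point. -/
structure PtIdemAlg : Type (u + 1) where
  X : Type u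
  a : X → X
  pt : X
  idem : ∀ x, a (a x) = a x
  fix : a pt = pt

/-- Homomorphisms preserve both the unary operation and the point. -/
instance : Category PtIdemAlg.{u} where
  Hom A B := { h : A.X → B.X // (∀ x, h (A.a x) = B.a (h x)) ∧ h A.pt = B.pt }
  id A := ⟨id, fun _ => rfl, rfl⟩
  comp {A B D} f g := ⟨g.1 ∘ f.1, by
    refine ⟨fun x => ?_, ?_⟩
    · simp [f.2.1, g.2.1]
    · simp [f.2.2, g.2.2]⟩
  id_comp f := rfl
  comp_id f := rfl
  assoc f g h := rfl

/-! A map `f : X + 1 → X` is the same as a unary operation `a = f ∘ inl` together with a point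
`• = f (inr ⋆)`. Evaluating the semialgebra law on the three summands `inl (inl x)`,
`inl (inr ⋆)` and `inr ⋆` of `(X + 1) + 1` gives `a (a x) = a x`, `a • = •` and a tautology;
likewise the homomorphism condition on `inl x` and `inr ⋆` says that `h` preserves `a` and `•`. -/

namespace MaybeSemiAlg

variable {A B : MaybeSemiAlg.{u}}

@[ext]
lemma hom_ext {g h : A ⟶ B} (e : g.1 = h.1) : g = h := Subtype.ext e

lemma eqToHom_val (p : A = B) : (eqToHom p).1 = cast (congrArg X p) := by
  subst p; rfl

lemma mk_congr_f {X : Type u} {f g : X ⊕ PUnit.{u+1} → X} (e : f = g) {lf lg} :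
    MaybeSemiAlg.mk X f lf = MaybeSemiAlg.mk X g lg := by
  subst e; rfl

def toPtIdemAlg : MaybeSemiAlg.{u} ⥤ PtIdemAlg.{u} where
  obj A :=
    { X := A.X
      a := fun x => A.f (.inl x)
      pt := A.f (.inr ⟨⟩)
      idem := fun x => A.law (.inl (.inl x))
      fix := A.law (.inl (.inr ⟨⟩)) }
  map h := ⟨h.1, fun x => h.2 (.inl x), h.2 (.inr ⟨⟩)⟩

end MaybeSemiAlg

namespace PtIdemAlg

def toMaybeSemiAlg : PtIdemAlg.{u} ⥤ MaybeSemiAlg.{u} where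
  obj A :=
    { X := A.X
      f := Sum.elim A.a fun _ => A.pt
      law := by rintro ((x | ⟨⟩) | ⟨⟩) <;> simp [A.idem, A.fix] }
  map h := ⟨h.1, by rintro (x | ⟨⟩) <;> simp [h.2.1, h.2.2]⟩

end PtIdemAlg

open MaybeSemiAlg PtIdemAlg

lemma toMaybeSemiAlg_obj_toPtIdemAlg_obj (A : MaybeSemiAlg.{u}) :
    toMaybeSemiAlg.obj (toPtIdemAlg.obj A) = A :=
  mk_congr_f <| funext <| by rintro (x | ⟨⟩) <;> rfl

lemma toPtIdemAlg_comp_toMaybeSemiAlg : toPtIdemAlg ⋙ toMaybeSemiAlg = 𝟭 MaybeSemiAlg.{u} :=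
  CategoryTheory.Functor.ext toMaybeSemiAlg_obj_toPtIdemAlg_obj fun A B h => by
    ext x
    show h.1 x = (eqToHom (toMaybeSemiAlg_obj_toPtIdemAlg_obj B).symm).1
      (h.1 ((eqToHom (toMaybeSemiAlg_obj_toPtIdemAlg_obj A)).1 x))
    rw [eqToHom_val, eqToHom_val]
    rfl

lemma toMaybeSemiAlg_comp_toPtIdemAlg : toMaybeSemiAlg ⋙ toPtIdemAlg = 𝟭 PtIdemAlg.{u} := rfl

/-- The category of semialgebras for the maybe monad on `Set` is isomorphic to the
category of pointed sets with an idempotent unary operation preserving the point. -/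
theorem maybeSemiAlg_iso_ptIdemAlg :
    Nonempty (Cat.of MaybeSemiAlg.{u} ≅ Cat.of PtIdemAlg.{u}) :=
  ⟨{ hom := toPtIdemAlg.toCatHom
     inv := toMaybeSemiAlg.toCatHom
     hom_inv_id := Cat.ext toPtIdemAlg_comp_toMaybeSemiAlg
     inv_hom_id := Cat.ext toMaybeSemiAlg_comp_toPtIdemAlg }⟩
end

section
/- The category of semialgebras for the nonempty-list (semigroup) monad on Set is isomorphic to the category of sets X equipped with a unary operation a and an associative binary operation · satisfying a(a(x)) = a(x), a(x·y) = x·y, and a(x)·a(y) = x·y, with homomorphisms preserving both operations. The semialgebra f : X⁺ → X corresponds to a(x) = f[x], x·y = f[x,y], and conversely (X, a, ·) yields f[x₁,…,xₙ] = a(x₁)·⋯·a(xₙ). -/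
open CategoryTheory

universe u

/-- Nonempty lists over `X`, encoded as a head together with a tail. -/
def NEL (X : Type u) : Type u := X × List X

/-- Functorial action of the nonempty-list functor. -/
def NEL.map {X Y : Type u} (f : X → Y) : NEL X → NEL Y :=
  fun w => (f w.1, w.2.map f)

/-- Flattening (concatenation), the multiplication of the nonempty-list monad. -/
def NEL.flat {X : Type u} : NEL (NEL X) → NEL X :=
  fun W => (W.1.1, W.1.2 ++ W.2.flatMap (fun q => q.1 :: q.2))

/-- A semialgebra for the nonempty-list (semigroup) monad on `Set`:
`f : X⁺ → X` with `f ∘ map f = f ∘ flatten`. -/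
structure SgSemiAlg : Type (u + 1) where
  X : Type u
  f : NEL X → X
  law : ∀ W : NEL (NEL X), f (NEL.map f W) = f (NEL.flat W)

instance : Category SgSemiAlg.{u} where
  Hom A B := { h : A.X → B.X // ∀ w, h (A.f w) = B.f (NEL.map h w) }
  id A := ⟨id, by intro w; cases w; simp [NEL.map]⟩
  comp {A B D} f g := ⟨g.1 ∘ f.1, by
    intro w
    simp only [Function.comp_apply, f.2, g.2]
    cases w
    simp [NEL.map]⟩
  id_comp f := rfl
  comp_id f := rfl
  assoc f g h := rfl

/-- A set with a unary operation `a` and an associative binary operation `·`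
satisfying `a (a x) = a x`, `a (x·y) = x·y` and `a x · a y = x·y`. -/
structure SgAlg : Type (u + 1) where
  X : Type u
  a : X → X
  mul : X → X → X
  idem : ∀ x, a (a x) = a x
  absorb : ∀ x y, a (mul x y) = mul x y
  mul_a : ∀ x y, mul (a x) (a y) = mul x y
  assoc : ∀ x y z, mul (mul x y) z = mul x (mul y z)

instance : Category SgAlg.{u} where
  Hom A B := { h : A.X → B.X //
    (∀ x, h (A.a x) = B.a (h x)) ∧ ∀ x y, h (A.mul x y) = B.mul (h x) (h y) }
  id A := ⟨id, fun _ => rfl, fun _ _ => rfl⟩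
  comp {A B D} f g := ⟨g.1 ∘ f.1, by
    refine ⟨fun x => ?_, fun x y => ?_⟩ <;> simp [f.2.1, g.2.1, f.2.2, g.2.2]⟩
  id_comp f := rfl
  comp_id f := rfl
  assoc f g h := rfl

/-! By the law on lists of at most two lists, `f[x] ↦ a`, `f[x, y] ↦ ·` satisfy the axioms, and
`f[x₁, …, xₙ, y] = f[f[x₁, …, xₙ], f[y]]` shows that `f` is the left-bracketed product
`a x₁ · ⋯ · a xₙ`, so `f` is recovered from `(a, ·)`. Conversely, since `a` fixes every such
product, evaluating the inner lists first only inserts `a`s that can be dropped, and the law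
becomes associativity of `·`. Both constructions leave underlying maps of homomorphisms
unchanged, so they are mutually inverse functors. -/

attribute [ext] SgSemiAlg SgAlg

namespace SgSemiAlg

variable (A : SgSemiAlg.{u})

theorem f_singleton_f (x : A.X) (l : List A.X) : A.f (A.f (x, l), []) = A.f (x, l) := by
  have h : A.f (A.f (x, l), []) = A.f (x, l ++ []) := A.law ((x, l), [])
  rwa [List.append_nil] at h

theorem f_pair_f (x : A.X) (l : List A.X) (y : A.X) (m : List A.X) :
    A.f (A.f (x, l), [A.f (y, m)]) = A.f (x, l ++ y :: m) := by
  have h : A.f (A.f (x, l), [A.f (y, m)]) = A.f (x, l ++ (y :: m ++ [])) :=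
    A.law ((x, l), [(y, m)])
  rwa [List.append_nil] at h

theorem f_f_left (x : A.X) (l : List A.X) (y : A.X) :
    A.f (A.f (x, l), [y]) = A.f (x, l ++ [y]) :=
  calc A.f (A.f (x, l), [y]) = A.f (A.f (A.f (x, l), []), [A.f (y, [])]) :=
        (A.f_pair_f _ [] y []).symm
    _ = A.f (x, l ++ [y]) := by rw [f_singleton_f]; exact A.f_pair_f x l y []

theorem f_f_right (x y : A.X) (m : List A.X) : A.f (x, [A.f (y, m)]) = A.f (x, y :: m) :=
  calc A.f (x, [A.f (y, m)]) = A.f (A.f (x, []), [A.f (A.f (y, m), [])]) :=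
        (A.f_pair_f x [] _ []).symm
    _ = A.f (x, y :: m) := by rw [f_singleton_f]; exact A.f_pair_f x [] y m

theorem f_eq_foldl (x : A.X) (l : List A.X) :
    A.f (x, l) = (l.map fun y => A.f (y, [])).foldl (fun p q => A.f (p, [q])) (A.f (x, [])) := by
  induction l using List.reverseRecOn with
  | nil => rfl
  | append_singleton l y ih =>
    rw [List.map_append, List.foldl_append, ← ih]
    exact (A.f_pair_f x l y []).symm

def toSgAlg : SgAlg.{u} where
  X := A.X
  a x := A.f (x, [])
  mul x y := A.f (x, [y])
  idem x := A.f_singleton_f x []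
  absorb x y := A.f_singleton_f x [y]
  mul_a x y := A.f_pair_f x [] y []
  assoc x y z := (A.f_f_left x [y] z).trans (A.f_f_right x y [z]).symm

end SgSemiAlg

namespace SgAlg

variable (B : SgAlg.{u})

theorem mul_foldl (c d : B.X) (l : List B.X) :
    B.mul c (l.foldl B.mul d) = l.foldl B.mul (B.mul c d) := by
  induction l generalizing d with
  | nil => rfl
  | cons y l ih => rw [List.foldl_cons, List.foldl_cons, ih, B.assoc]

theorem a_foldl_mul (x y : B.X) (l : List B.X) :
    B.a (l.foldl B.mul (B.mul x y)) = l.foldl B.mul (B.mul x y) := by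
  induction l generalizing y with
  | nil => exact B.absorb x y
  | cons z l ih => rw [List.foldl_cons, B.assoc, ih]

def eval (w : NEL B.X) : B.X := (w.2.map B.a).foldl B.mul (B.a w.1)

theorem a_eval (w : NEL B.X) : B.a (B.eval w) = B.eval w := by
  obtain ⟨x, _ | ⟨y, l⟩⟩ := w
  · exact B.idem x
  · exact B.a_foldl_mul _ _ _

theorem mul_eval (c : B.X) (w : NEL B.X) :
    B.mul c (B.eval w) = ((w.1 :: w.2).map B.a).foldl B.mul c := by
  rw [eval, mul_foldl]
  rfl

theorem foldl_map_eval (c : B.X) (L : List (NEL B.X)) :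
    (L.map B.eval).foldl B.mul c = ((L.flatMap fun w => w.1 :: w.2).map B.a).foldl B.mul c := by
  induction L generalizing c with
  | nil => rfl
  | cons w L ih =>
    rw [List.map_cons, List.foldl_cons, ih, List.flatMap_cons, List.map_append,
      List.foldl_append, mul_eval]

theorem eval_map_eval (W : NEL (NEL B.X)) : B.eval (NEL.map B.eval W) = B.eval (NEL.flat W) := by
  obtain ⟨w, L⟩ := W
  have hL : (L.map B.eval).map B.a = L.map B.eval := by
    rw [List.map_map]
    exact List.map_congr_left fun v _ => B.a_eval v
  change ((L.map B.eval).map B.a).foldl B.mul (B.a (B.eval w))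
    = ((w.2 ++ L.flatMap fun v => v.1 :: v.2).map B.a).foldl B.mul (B.a w.1)
  rw [hL, a_eval, foldl_map_eval, List.map_append, List.foldl_append]
  rfl

def toSgSemiAlg : SgSemiAlg.{u} where
  X := B.X
  f := B.eval
  law := B.eval_map_eval

end SgAlg

theorem SgSemiAlg.toSgAlg_toSgSemiAlg (A : SgSemiAlg.{u}) : A.toSgAlg.toSgSemiAlg = A :=
  SgSemiAlg.ext rfl (heq_of_eq (funext fun w => (A.f_eq_foldl w.1 w.2).symm))

theorem SgAlg.toSgSemiAlg_toSgAlg (B : SgAlg.{u}) : B.toSgSemiAlg.toSgAlg = B :=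
  SgAlg.ext rfl HEq.rfl (heq_of_eq (funext₂ B.mul_a))

namespace SgAlg

variable {B C : SgAlg.{u}} (h : B ⟶ C)

theorem hom_foldl_mul (c : B.X) (l : List B.X) :
    h.1 (l.foldl B.mul c) = (l.map h.1).foldl C.mul (h.1 c) := by
  induction l generalizing c with
  | nil => rfl
  | cons y l ih => rw [List.foldl_cons, ih, h.2.2]; rfl

theorem hom_eval (w : NEL B.X) : h.1 (B.eval w) = C.eval (NEL.map h.1 w) := by
  change h.1 ((w.2.map B.a).foldl B.mul (B.a w.1))
    = ((w.2.map h.1).map C.a).foldl C.mul (C.a (h.1 w.1))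
  rw [hom_foldl_mul, List.map_map, List.map_map, h.2.1]
  exact congrArg (List.foldl _ _) (List.map_congr_left fun x _ => h.2.1 x)

end SgAlg

def SgSemiAlg.toSgAlgFunctor : SgSemiAlg.{u} ⥤ SgAlg.{u} where
  obj := SgSemiAlg.toSgAlg
  map h := ⟨h.1, fun x => h.2 (x, []), fun x y => h.2 (x, [y])⟩

def SgAlg.toSgSemiAlgFunctor : SgAlg.{u} ⥤ SgSemiAlg.{u} where
  obj := SgAlg.toSgSemiAlg
  map h := ⟨h.1, SgAlg.hom_eval h⟩

theorem SgSemiAlg.hom_heq_of_val_heq {A A' B B' : SgSemiAlg.{u}} (hA : A = A') (hB : B = B')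
    (f : A ⟶ B) (g : A' ⟶ B') (h : HEq f.1 g.1) : HEq f g := by
  subst hA hB
  exact heq_of_eq (Subtype.ext (eq_of_heq h))

theorem SgAlg.hom_heq_of_val_heq {A A' B B' : SgAlg.{u}} (hA : A = A') (hB : B = B')
    (f : A ⟶ B) (g : A' ⟶ B') (h : HEq f.1 g.1) : HEq f g := by
  subst hA hB
  exact heq_of_eq (Subtype.ext (eq_of_heq h))

theorem SgSemiAlg.toSgAlgFunctor_comp_toSgSemiAlgFunctor :
    SgSemiAlg.toSgAlgFunctor ⋙ SgAlg.toSgSemiAlgFunctor = 𝟭 SgSemiAlg.{u} :=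
  Functor.hext SgSemiAlg.toSgAlg_toSgSemiAlg fun A B _ =>
    SgSemiAlg.hom_heq_of_val_heq A.toSgAlg_toSgSemiAlg B.toSgAlg_toSgSemiAlg _ _ HEq.rfl

theorem SgAlg.toSgSemiAlgFunctor_comp_toSgAlgFunctor :
    SgAlg.toSgSemiAlgFunctor ⋙ SgSemiAlg.toSgAlgFunctor = 𝟭 SgAlg.{u} :=
  Functor.hext SgAlg.toSgSemiAlg_toSgAlg fun A B _ =>
    SgAlg.hom_heq_of_val_heq A.toSgSemiAlg_toSgAlg B.toSgSemiAlg_toSgAlg _ _ HEq.rfl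

/-- The category of semialgebras for the nonempty-list (semigroup) monad on `Set`
is isomorphic to the category of sets with an idempotent-style unary operation `a`
and an associative binary operation `·` satisfying the listed equations; the
semialgebra `f` corresponds to `a x = f[x]`, `x·y = f[x,y]`, and conversely
`(X, a, ·)` yields `f[x₁,…,xₙ] = a x₁ · ⋯ · a xₙ`. -/
theorem sgSemiAlg_iso_sgAlg :
    ∃ e : Cat.of SgSemiAlg.{u} ≅ Cat.of SgAlg.{u},
      (∀ A : SgSemiAlg.{u},
        (e.hom.toFunctor.obj A).X = A.X ∧
        HEq (e.hom.toFunctor.obj A).a (fun x : A.X => A.f (x, [])) ∧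
        HEq (e.hom.toFunctor.obj A).mul (fun x y : A.X => A.f (x, [y]))) ∧
      (∀ B : SgAlg.{u},
        (e.inv.toFunctor.obj B).X = B.X ∧
        HEq (e.inv.toFunctor.obj B).f
          (fun w : NEL B.X => (w.2.map B.a).foldl B.mul (B.a w.1))) :=
  ⟨{  hom := SgSemiAlg.toSgAlgFunctor.toCatHom
      inv := SgAlg.toSgSemiAlgFunctor.toCatHom
      hom_inv_id := Cat.Hom.ext SgSemiAlg.toSgAlgFunctor_comp_toSgSemiAlgFunctor
      inv_hom_id := Cat.Hom.ext SgAlg.toSgSemiAlgFunctor_comp_toSgAlgFunctor },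
    fun _ => ⟨rfl, HEq.rfl, HEq.rfl⟩, fun _ => ⟨rfl, HEq.rfl⟩⟩
end
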